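/- Suppose for all θ in the relevant region the KL-smoothness bound KL(p(U_i|D_i,f_0;θ) || p(U_i|D_i,f;θ)) ≤ L T ||f_0−f||² holds and tr(Var_{q_i^{(m+1)}}(f_i)) ≤ L' T^{−r} for all i. If (q,θ)-updates at fixed anchor are exact blockwise maximizations of the anchored ELBO, and the anchor at each iteration is refreshed to the mean anchor f_{0i}^{(m+1)} = E_{q_i^{(m+1)}}[f_i], then the normalized anchored ELBO L̄_A = L_A/(nT) satisfies L̄_A(f_0^{(m+1)}, q^{(m+1)}, θ^{(m+1)}) ≥ L̄_A(f_0^{(m)}, q^{(m)}, θ^{(m)}) − L L' T^{−r}. -/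
import Mathlib


open MeasureTheory

section
variable {𝒰 Θ : Type*} [MeasurableSpace 𝒰] {d : ℕ}

/-- Kullback–Leibler divergence between two densities w.r.t. `μ`. -/
noncomputable def KLdiv (μ : Measure 𝒰) (q p : 𝒰 → ℝ) : ℝ :=
  ∫ u, q u * Real.log (q u / p u) ∂μ

/-- The anchored ELBO, written (as in the paper) as
`L_A(f₀,q,θ) = −Σ_i E_{q_i(f)}[KL(p(U|D_i,f₀ᵢ;θ) ‖ p(U|D_i,f;θ))] + C(q,θ)`
with `C(q,θ) = Σ_i E_{q_i(f)}[log p(D_i,f;θ) − log q_i(f)]`. -/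
noncomputable def ELBO_A (μ : Measure 𝒰)
    (ν : Measure (EuclideanSpace ℝ (Fin d))) {n : ℕ}
    (pU : Θ → Fin n → EuclideanSpace ℝ (Fin d) → 𝒰 → ℝ)
    (pDf : Θ → Fin n → EuclideanSpace ℝ (Fin d) → ℝ)
    (f0 : Fin n → EuclideanSpace ℝ (Fin d))
    (q : Fin n → EuclideanSpace ℝ (Fin d) → ℝ) (θ : Θ) : ℝ :=
  -(∑ i, ∫ f, q i f * KLdiv μ (pU θ i (f0 i)) (pU θ i f) ∂ν)
    + ∑ i, ∫ f, q i f * (Real.log (pDf θ i f) - Real.log (q i f)) ∂ν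

/-- **Asymptotic monotonicity of anchored variational EM.**
Under KL-smoothness and variance concentration, if the `(q,θ)`-updates are
exact blockwise maximizations of the anchored ELBO at the fixed current
anchor, and the anchor is then refreshed to the mean anchor
`f₀ᵢ^{(m+1)} = E_{q_i^{(m+1)}}[f]`, then the normalized anchored ELBO
decreases by at most `L L' T^{−r}` at each iteration:
`L̄_A(f₀^{(m+1)},q^{(m+1)},θ^{(m+1)}) ≥ L̄_A(f₀^{(m)},q^{(m)},θ^{(m)}) − L L' T^{−r}`. -/
theorem avem_asymptotic_monotonicity
    (μ : Measure 𝒰) (ν : Measure (EuclideanSpace ℝ (Fin d)))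
    [SigmaFinite μ] [SigmaFinite ν] {n : ℕ} (hn : 0 < n)
    (pU : Θ → Fin n → EuclideanSpace ℝ (Fin d) → 𝒰 → ℝ)
    (pDf : Θ → Fin n → EuclideanSpace ℝ (Fin d) → ℝ)
    (L L' T r : ℝ) (hL : 0 < L) (hL' : 0 < L') (hT : 0 < T)
    (hr0 : 0 < r) (hr1 : r ≤ 1)
    -- iterates of the anchored variational EM algorithm
    (f0s : ℕ → Fin n → EuclideanSpace ℝ (Fin d))
    (qs : ℕ → Fin n → EuclideanSpace ℝ (Fin d) → ℝ)
    (θs : ℕ → Θ)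
    -- the conditional posteriors and variational factors are probability densities
    (hpU_pos : ∀ θ i f u, 0 < pU θ i f u)
    (hpU_prob : ∀ θ i f, ∫ u, pU θ i f u ∂μ = 1)
    (hpDf_pos : ∀ θ i f, 0 < pDf θ i f)
    (hq_nonneg : ∀ m i f, 0 ≤ qs m i f)
    (hq_prob : ∀ m i, ∫ f, qs m i f ∂ν = 1)
    -- finiteness of all relevant expectations
    (hint_KL : ∀ θ i (a b : EuclideanSpace ℝ (Fin d)),
      Integrable (fun u => pU θ i a u * Real.log (pU θ i a u / pU θ i b u)) μ)
    (hint_KLmix : ∀ m i (a : EuclideanSpace ℝ (Fin d)), ∀ θ,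
      Integrable (fun f => qs m i f * KLdiv μ (pU θ i a) (pU θ i f)) ν)
    (hint_C : ∀ m i, ∀ θ, Integrable
      (fun f => qs m i f * (Real.log (pDf θ i f) - Real.log (qs m i f))) ν)
    (hmom1 : ∀ m i, Integrable (fun f => qs m i f • f) ν)
    (hmom2 : ∀ m i (a : EuclideanSpace ℝ (Fin d)),
      Integrable (fun f => qs m i f * ‖f - a‖ ^ 2) ν)
    -- KL-smoothness of the conditional posterior family (uniformly over θ)
    (hsmooth : ∀ θ i (a b : EuclideanSpace ℝ (Fin d)),
      KLdiv μ (pU θ i a) (pU θ i b) ≤ L * T * ‖a - b‖ ^ 2)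
    -- variance concentration: `tr(Var_{q_i^{(m+1)}}(f)) ≤ L' T^{−r}`
    (hvar : ∀ m i,
      (∫ f, qs (m + 1) i f * ‖f - f0s (m + 1) i‖ ^ 2 ∂ν) ≤ L' * T ^ (-r))
    -- the anchor is refreshed to the mean anchor
    (hanchor : ∀ m i, f0s (m + 1) i = ∫ f, qs (m + 1) i f • f ∂ν)
    -- exact blockwise maximization of the anchored ELBO at the fixed anchor
    (hθmax : ∀ m, ∀ θ' : Θ,
      ELBO_A μ ν pU pDf (f0s m) (qs m) θ'
        ≤ ELBO_A μ ν pU pDf (f0s m) (qs m) (θs (m + 1)))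
    (hqmax : ∀ m, ∀ q' : Fin n → EuclideanSpace ℝ (Fin d) → ℝ,
      (∀ i f, 0 ≤ q' i f) → (∀ i, ∫ f, q' i f ∂ν = 1) →
      ELBO_A μ ν pU pDf (f0s m) q' (θs (m + 1))
        ≤ ELBO_A μ ν pU pDf (f0s m) (qs (m + 1)) (θs (m + 1))) :
    ∀ m, (1 / (n * T)) * ELBO_A μ ν pU pDf (f0s m) (qs m) (θs m)
        - L * L' * T ^ (-r)
      ≤ (1 / (n * T)) *
          ELBO_A μ ν pU pDf (f0s (m + 1)) (qs (m + 1)) (θs (m + 1)) := by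
  intro m
  have hnT : (0:ℝ) < (n : ℝ) * T := by positivity
  -- KL nonnegativity (Gibbs' inequality)
  have hKL0 : ∀ θ i (a b : EuclideanSpace ℝ (Fin d)),
      0 ≤ KLdiv μ (pU θ i a) (pU θ i b) := by
    intro θ i a b
    have hpa : Integrable (fun u => pU θ i a u) μ := by
      by_contra h
      have := hpU_prob θ i a
      rw [integral_undef h] at this
      norm_num at this
    have hpb : Integrable (fun u => pU θ i b u) μ := by
      by_contra h
      have := hpU_prob θ i b
      rw [integral_undef h] at this
      norm_num at this
    have hle : ∀ u, pU θ i a u - pU θ i b u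
        ≤ pU θ i a u * Real.log (pU θ i a u / pU θ i b u) := by
      intro u
      have ha := hpU_pos θ i a u
      have hb := hpU_pos θ i b u
      have hx : 0 < pU θ i b u / pU θ i a u := div_pos hb ha
      have h1 := Real.log_le_sub_one_of_pos hx
      have h2 : pU θ i a u * Real.log (pU θ i b u / pU θ i a u)
          ≤ pU θ i a u * (pU θ i b u / pU θ i a u - 1) :=
        mul_le_mul_of_nonneg_left h1 ha.le
      have h3 : pU θ i a u * (pU θ i b u / pU θ i a u - 1)
          = pU θ i b u - pU θ i a u := by
        field_simp
      have h4 : Real.log (pU θ i a u / pU θ i b u)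
          = - Real.log (pU θ i b u / pU θ i a u) := by
        rw [← Real.log_inv, inv_div]
      rw [h4]
      nlinarith
    have hmono : ∫ u, (pU θ i a u - pU θ i b u) ∂μ
        ≤ ∫ u, pU θ i a u * Real.log (pU θ i a u / pU θ i b u) ∂μ :=
      integral_mono (hpa.sub hpb) (hint_KL θ i a b) hle
    have hz : ∫ u, (pU θ i a u - pU θ i b u) ∂μ = 0 := by
      rw [integral_sub hpa hpb, hpU_prob, hpU_prob]
      ring
    unfold KLdiv
    linarith
  set θ' := θs (m + 1) with hθ'
  -- monotone steps at fixed anchor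
  have h1 : ELBO_A μ ν pU pDf (f0s m) (qs m) (θs m)
      ≤ ELBO_A μ ν pU pDf (f0s m) (qs (m + 1)) θ' :=
    (hθmax m (θs m)).trans
      (hqmax m (qs m) (hq_nonneg m) (hq_prob m))
  -- anchor refresh loses at most n * (L*T*(L'*T^(-r)))
  have hterm : ∀ i, ∫ f, qs (m + 1) i f *
      KLdiv μ (pU θ' i (f0s (m + 1) i)) (pU θ' i f) ∂ν
      ≤ L * T * (L' * T ^ (-r)) := by
    intro i
    have hptw : ∀ f : EuclideanSpace ℝ (Fin d),
        qs (m + 1) i f * KLdiv μ (pU θ' i (f0s (m + 1) i)) (pU θ' i f)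
        ≤ (L * T) * (qs (m + 1) i f * ‖f - f0s (m + 1) i‖ ^ 2) := by
      intro f
      have hs := hsmooth θ' i (f0s (m + 1) i) f
      rw [norm_sub_rev] at hs
      have := mul_le_mul_of_nonneg_left hs (hq_nonneg (m + 1) i f)
      nlinarith [hq_nonneg (m + 1) i f]
    have hintR : Integrable
        (fun f => (L * T) * (qs (m + 1) i f * ‖f - f0s (m + 1) i‖ ^ 2)) ν :=
      (hmom2 (m + 1) i (f0s (m + 1) i)).const_mul (L * T)
    have hmono := integral_mono (hint_KLmix (m + 1) i (f0s (m + 1) i) θ')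
      hintR hptw
    rw [MeasureTheory.integral_const_mul] at hmono
    calc ∫ f, qs (m + 1) i f *
          KLdiv μ (pU θ' i (f0s (m + 1) i)) (pU θ' i f) ∂ν
        ≤ (L * T) * ∫ f, qs (m + 1) i f * ‖f - f0s (m + 1) i‖ ^ 2 ∂ν := hmono
      _ ≤ (L * T) * (L' * T ^ (-r)) :=
          mul_le_mul_of_nonneg_left (hvar m i) (by positivity)
      _ = L * T * (L' * T ^ (-r)) := by ring
  have hSnew : ∑ i, ∫ f, qs (m + 1) i f *
      KLdiv μ (pU θ' i (f0s (m + 1) i)) (pU θ' i f) ∂ν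
      ≤ (n : ℝ) * (L * T * (L' * T ^ (-r))) := by
    calc ∑ i, ∫ f, qs (m + 1) i f *
          KLdiv μ (pU θ' i (f0s (m + 1) i)) (pU θ' i f) ∂ν
        ≤ ∑ _i : Fin n, L * T * (L' * T ^ (-r)) :=
          Finset.sum_le_sum fun i _ => hterm i
      _ = (n : ℝ) * (L * T * (L' * T ^ (-r))) := by
          simp [Finset.sum_const, mul_comm]
  have hSold : 0 ≤ ∑ i, ∫ f, qs (m + 1) i f *
      KLdiv μ (pU θ' i (f0s m i)) (pU θ' i f) ∂ν := by
    apply Finset.sum_nonneg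
    intro i _
    apply integral_nonneg
    intro f
    exact mul_nonneg (hq_nonneg (m + 1) i f) (hKL0 θ' i (f0s m i) f)
  have h2 : ELBO_A μ ν pU pDf (f0s m) (qs (m + 1)) θ'
      ≤ ELBO_A μ ν pU pDf (f0s (m + 1)) (qs (m + 1)) θ'
        + (n : ℝ) * (L * T * (L' * T ^ (-r))) := by
    unfold ELBO_A
    linarith
  have h3 : ELBO_A μ ν pU pDf (f0s m) (qs m) (θs m)
      ≤ ELBO_A μ ν pU pDf (f0s (m + 1)) (qs (m + 1)) (θs (m + 1))
        + (n : ℝ) * (L * T * (L' * T ^ (-r))) := by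
    linarith
  have hkey : (1 / ((n : ℝ) * T)) * ((n : ℝ) * (L * T * (L' * T ^ (-r))))
      = L * L' * T ^ (-r) := by
    field_simp
  have hpos : (0:ℝ) < 1 / ((n : ℝ) * T) := by positivity
  have := mul_le_mul_of_nonneg_left h3 hpos.le
  rw [mul_add, hkey] at this
  linarith


end
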